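/- Let G be a finite simple graph on n vertices with m ≥ 1 edges, maximum vertex degree δ, and clique number w (the largest size of a complete subgraph). For real parameters q with 0 < q < 1 and r ≠ 1, the Sharma–Mittal entropy of G based on the signless Laplacian satisfies H_{q,r}(G) ≤ (1/(1−r))·[(n·((δ + n(1 − 1/w))/(2m))^q)^{(1−r)/(1−q)} − 1]. -/

import Mathlib

/-!
The signless Laplacian is positive semidefinite with trace `d = 2m`, so the `γᵢ` form a
probability vector. By concavity of `x ↦ x ^ q` the power sum `∑ γᵢ ^ q` is at most
`n (1/n) ^ q`, and the entropy is a monotone function of this power sum. Finally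
`1/n ≤ δ / 2m ≤ (δ + n (1 - 1/w)) / 2m` because `2m ≤ n δ`, so the spectral bound
`μ₁ ≤ δ + n (1 - 1/w)` is not needed.
-/

open Finset

namespace SMG

variable {V : Type*} [Fintype V] [DecidableEq V]

/-- The degree sum of a graph. -/
def degSum (G : SimpleGraph V) [DecidableRel G.Adj] : ℕ := ∑ v, G.degree v

/-- The signless Laplacian matrix `Q(G) = D(G) + A(G)` of a simple graph. -/
def signlessLapMatrix (G : SimpleGraph V) [DecidableRel G.Adj] : Matrix V V ℝ :=
  G.degMatrix ℝ + G.adjMatrix ℝ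

/-- The signless Laplacian matrix of a simple graph is Hermitian. -/
lemma signlessLap_isHermitian (G : SimpleGraph V) [DecidableRel G.Adj] :
    (signlessLapMatrix G).IsHermitian := by
  refine Matrix.IsHermitian.add ?_ ?_
  · exact Matrix.isHermitian_diagonal _
  · rw [Matrix.IsHermitian, Matrix.conjTranspose_eq_transpose_of_trivial]
    exact G.isSymm_adjMatrix

/-- The eigenvalues (with multiplicity) of the density matrix `ρ_Q(G) = Q(G)/d`,
namely `γ v = μ v / d`. -/
noncomputable def signlessLapDensityEigen (G : SimpleGraph V) [DecidableRel G.Adj] : V → ℝ :=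
  fun v => (signlessLap_isHermitian G).eigenvalues v / (degSum G : ℝ)

/-- Sharma–Mittal entropy of a graph based on its signless Laplacian:
`H_{q,r}(G) = (1/(1-r)) * ((Σ γᵢ^q)^((1-r)/(1-q)) - 1)` with real powers. -/
noncomputable def signlessLapSM (G : SimpleGraph V) [DecidableRel G.Adj] (q r : ℝ) : ℝ :=
  (1 / (1 - r)) *
    ((∑ v, signlessLapDensityEigen G v ^ q) ^ ((1 - r) / (1 - q)) - 1)

open Matrix SimpleGraph in
lemma signlessLapMatrix_toLinearMap₂' (G : SimpleGraph V) [DecidableRel G.Adj] (x : V → ℝ) :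
    Matrix.toLinearMap₂' ℝ (signlessLapMatrix G) x x =
      (∑ i, ∑ j, if G.Adj i j then (x i + x j) ^ 2 else 0) / 2 := by
  simp_rw [toLinearMap₂'_apply', signlessLapMatrix, add_mulVec, dotProduct_add,
    dotProduct_mulVec_degMatrix, dotProduct_mulVec_adjMatrix, ← sum_add_distrib,
    degree_eq_sum_if_adj, sum_mul, ite_mul, one_mul, zero_mul, ← sum_add_distrib, ite_add_ite,
    add_zero]
  rw [← add_self_div_two (∑ i : V, ∑ j : V, _)]
  conv_lhs => enter [1, 2, 2, i, 2, j]; rw [if_congr (adj_comm G i j) rfl rfl]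
  conv_lhs => enter [1, 2]; rw [sum_comm]
  simp_rw [← sum_add_distrib, ite_add_ite]
  congr 2 with i
  congr 2 with j
  ring_nf

lemma signlessLapMatrix_posSemidef (G : SimpleGraph V) [DecidableRel G.Adj] :
    (signlessLapMatrix G).PosSemidef := by
  refine Matrix.posSemidef_iff_dotProduct_mulVec.mpr ⟨signlessLap_isHermitian G, fun x => ?_⟩
  rw [star_trivial, ← Matrix.toLinearMap₂'_apply', signlessLapMatrix_toLinearMap₂']
  positivity

lemma trace_signlessLapMatrix (G : SimpleGraph V) [DecidableRel G.Adj] :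
    (signlessLapMatrix G).trace = degSum G := by
  simp [signlessLapMatrix, Matrix.trace_add, SimpleGraph.degMatrix, degSum]

omit [DecidableEq V] in
lemma degSum_le_card_mul_maxDegree (G : SimpleGraph V) [DecidableRel G.Adj] :
    degSum G ≤ Fintype.card V * G.maxDegree := by
  simpa [degSum] using sum_le_sum fun v (_ : v ∈ univ) => G.degree_le_maxDegree v

lemma signlessLapDensityEigen_nonneg (G : SimpleGraph V) [DecidableRel G.Adj] (v : V) :
    0 ≤ signlessLapDensityEigen G v :=
  div_nonneg ((signlessLapMatrix_posSemidef G).eigenvalues_nonneg v) (Nat.cast_nonneg _)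

lemma sum_signlessLapDensityEigen (G : SimpleGraph V) [DecidableRel G.Adj] (hG : degSum G ≠ 0) :
    ∑ v, signlessLapDensityEigen G v = 1 := by
  have htr := (signlessLap_isHermitian G).trace_eq_sum_eigenvalues
  simp only [trace_signlessLapMatrix, RCLike.ofReal_real_eq_id, id] at htr
  unfold signlessLapDensityEigen
  rw [← sum_div, ← htr, div_self (by exact_mod_cast hG)]

lemma _root_.Real.sum_rpow_le_card_mul_mean_rpow {ι : Type*} [Fintype ι] {p : ι → ℝ} {q : ℝ}
    (hp : ∀ i, 0 ≤ p i) (hq₀ : 0 ≤ q) (hq₁ : q ≤ 1) :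
    ∑ i, p i ^ q ≤ Fintype.card ι * ((∑ i, p i) / Fintype.card ι) ^ q := by
  rcases isEmpty_or_nonempty ι with _ | _
  · simp
  have hn : (0 : ℝ) < Fintype.card ι := by exact_mod_cast Fintype.card_pos
  have hjensen := (Real.concaveOn_rpow hq₀ hq₁).le_map_sum (t := univ)
    (w := fun _ => (Fintype.card ι : ℝ)⁻¹) (p := p) (fun _ _ => by positivity)
    (by simp [hn.ne']) (fun i _ => hp i)
  simp only [smul_eq_mul, ← mul_sum] at hjensen
  rw [← inv_mul_eq_div]
  rwa [inv_mul_le_iff₀ hn] at hjensen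

noncomputable def sharmaMittalOfPowerSum (q r x : ℝ) : ℝ :=
  1 / (1 - r) * (x ^ ((1 - r) / (1 - q)) - 1)

/-- The exponent `(1 - r) / (1 - q)` has the sign of the prefactor `1 / (1 - r)`. -/
lemma sharmaMittalOfPowerSum_monotoneOn {q : ℝ} (r : ℝ) (hq : q < 1) :
    MonotoneOn (sharmaMittalOfPowerSum q r) (Set.Ioi 0) := by
  intro x hx y _ hxy
  have hq' : 0 < 1 - q := sub_pos.mpr hq
  unfold sharmaMittalOfPowerSum
  rcases le_total 0 (1 - r) with hr | hr
  · have hpow := Real.rpow_le_rpow (le_of_lt hx) hxy (div_nonneg hr hq'.le)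
    gcongr
  · have hpow := Real.rpow_le_rpow_of_nonpos hx hxy (div_nonpos_of_nonpos_of_nonneg hr hq'.le)
    exact mul_le_mul_of_nonpos_left (by linarith) (one_div_nonpos.mpr hr)

theorem signlessLapSM_le_maxDegree_cliqueNum_general (G : SimpleGraph V) [DecidableRel G.Adj]
    (m : ℕ) (hm : m = G.edgeFinset.card) (hm1 : 1 ≤ m)
    (q r : ℝ) (hq0 : 0 < q) (hq1 : q < 1) :
    signlessLapSM G q r ≤
      (1 / (1 - r)) *
        (((Fintype.card V : ℝ) *
            (((G.maxDegree : ℝ) + (Fintype.card V : ℝ) * (1 - 1 / (G.cliqueNum : ℝ))) /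
              (2 * m)) ^ q) ^ ((1 - r) / (1 - q)) - 1) := by
  have hd : (degSum G : ℝ) = 2 * m := by
    rw [degSum, G.sum_degrees_eq_twice_card_edges, hm]; push_cast; rfl
  have hd₀ : (0 : ℝ) < 2 * m := by norm_cast; omega
  have hγ : ∑ v, signlessLapDensityEigen G v = 1 :=
    sum_signlessLapDensityEigen G (by exact_mod_cast hd ▸ hd₀.ne')
  obtain ⟨v, -, hv⟩ := (sum_pos_iff_of_nonneg fun v _ => signlessLapDensityEigen_nonneg G v).mp
    (hγ ▸ one_pos)
  have hn : (0 : ℝ) < Fintype.card V := by have : Nonempty V := ⟨v⟩; positivity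
  have hpow :
      ∑ v, signlessLapDensityEigen G v ^ q ≤ Fintype.card V * (1 / Fintype.card V) ^ q := by
    simpa [hγ] using Real.sum_rpow_le_card_mul_mean_rpow (signlessLapDensityEigen_nonneg G)
      hq0.le hq1.le
  have hmean : 1 / (Fintype.card V : ℝ) ≤
      ((G.maxDegree : ℝ) + Fintype.card V * (1 - 1 / (G.cliqueNum : ℝ))) / (2 * m) := by
    have hΔ : (2 * m : ℝ) ≤ Fintype.card V * G.maxDegree := by
      rw [← hd]; exact_mod_cast degSum_le_card_mul_maxDegree G
    have hw : 0 ≤ 1 - 1 / (G.cliqueNum : ℝ) := by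
      simpa [one_div] using Nat.cast_inv_le_one (α := ℝ) G.cliqueNum
    calc 1 / (Fintype.card V : ℝ) ≤ G.maxDegree / (2 * m) := by
          rw [div_le_div_iff₀ hn hd₀]; linarith
      _ ≤ _ := by gcongr; exact le_add_of_nonneg_right (mul_nonneg hn.le hw)
  have hpos : 0 < ∑ v, signlessLapDensityEigen G v ^ q :=
    sum_pos' (fun v _ => Real.rpow_nonneg (signlessLapDensityEigen_nonneg G v) q)
      ⟨v, mem_univ v, Real.rpow_pos_of_pos hv q⟩
  have hB := (one_div_pos.mpr hn).trans_le hmean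
  exact sharmaMittalOfPowerSum_monotoneOn r hq1 hpos (Set.mem_Ioi.mpr (by positivity))
    (hpow.trans (by gcongr))

/-- Upper bound on the Sharma–Mittal entropy (signless Laplacian) in terms of the maximum
degree `δ` and the clique number `w`, for `0 < q < 1`:
`H_{q,r}(G) ≤ (1/(1−r))·[(n·((δ + n(1 − 1/w))/(2m))^q)^{(1−r)/(1−q)} − 1]`. -/
theorem signlessLapSM_le_maxDegree_cliqueNum (G : SimpleGraph V) [DecidableRel G.Adj]
    (m : ℕ) (hm : m = G.edgeFinset.card) (hm1 : 1 ≤ m)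
    (q r : ℝ) (hq0 : 0 < q) (hq1 : q < 1) (hr : r ≠ 1) :
    signlessLapSM G q r ≤
      (1 / (1 - r)) *
        (((Fintype.card V : ℝ) *
            (((G.maxDegree : ℝ) + (Fintype.card V : ℝ) * (1 - 1 / (G.cliqueNum : ℝ))) /
              (2 * m)) ^ q) ^ ((1 - r) / (1 - q)) - 1) :=
  signlessLapSM_le_maxDegree_cliqueNum_general G m hm hm1 q r hq0 hq1

end SMG
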